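/- Let a < b be positive integers. In the partizan subtraction game with S_L = {a} and S_R = {b}, the outcome sequence is purely periodic with period a+b: writing r = n mod (a+b), the outcome of n is P if r < a, L if a ≤ r < b, and N if b ≤ r < a+b. -/
import Mathlib


mutual
def LeftFirstWins (SL SR : Finset ℕ) : ℕ → Prop
  | n => ∃ s ∈ SL, ∃ (_ : 0 < s) (_ : s ≤ n), ¬ RightFirstWins SL SR (n - s)
  termination_by n => n
  decreasing_by omega
def RightFirstWins (SL SR : Finset ℕ) : ℕ → Prop
  | n => ∃ s ∈ SR, ∃ (_ : 0 < s) (_ : s ≤ n), ¬ LeftFirstWins SL SR (n - s)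
  termination_by n => n
  decreasing_by omega
end

inductive Outcome | P | L | R | N
deriving DecidableEq

open Classical in
noncomputable def outcome (SL SR : Finset ℕ) (n : ℕ) : Outcome :=
  if LeftFirstWins SL SR n then
    if RightFirstWins SL SR n then .N else .L
  else
    if RightFirstWins SL SR n then .R else .P

lemma sub_mod_eq (m s n : ℕ) (hm : s < m) (hs : s ≤ n) :
    (n - s) % m = if s ≤ n % m then n % m - s else n % m + m - s := by
  have hm0 : 0 < m := by omega
  set q := n / m with hq
  set r := n % m with hr
  have hrm : r < m := Nat.mod_lt _ hm0
  have hn : m * q + r = n := Nat.div_add_mod n m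
  split_ifs with h
  · have h1 : n - s = m * q + (r - s) := by omega
    rw [h1, Nat.mul_add_mod, Nat.mod_eq_of_lt (by omega)]
  · have hq1 : 1 ≤ q := by
      rcases Nat.eq_zero_or_pos q with h0 | h0
      · rw [h0, Nat.mul_zero] at hn; omega
      · exact h0
    have h2 : m * (q - 1) = m * q - m := by
      rw [Nat.mul_sub, Nat.mul_one]
    have h3 : m ≤ m * q := Nat.le_mul_of_pos_right m hq1
    have h4 : n - s = m * (q - 1) + (r + m - s) := by omega
    rw [h4, Nat.mul_add_mod, Nat.mod_eq_of_lt (by omega)]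

lemma main_char (a b : ℕ) (ha : 0 < a) (hab : a < b) (n : ℕ) :
    (LeftFirstWins {a} {b} n ↔ a ≤ n % (a + b)) ∧
    (RightFirstWins {a} {b} n ↔ b ≤ n % (a + b)) := by
  induction n using Nat.strong_induction_on with
  | _ n ih =>
  have hrlt : n % (a + b) < a + b := Nat.mod_lt _ (by omega)
  have hmle : n % (a + b) ≤ n := Nat.mod_le n (a + b)
  constructor
  · rw [LeftFirstWins]
    simp only [Finset.mem_singleton]
    constructor
    · rintro ⟨s, hs, hs0, hsn, hR⟩
      rw [hs] at hs0 hsn hR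
      rw [(ih _ (by omega)).2, sub_mod_eq (a + b) a n (by omega) hsn] at hR
      split_ifs at hR with h
      · exact h
      · omega
    · intro h
      refine ⟨a, rfl, ha, by omega, ?_⟩
      rw [(ih _ (by omega)).2, sub_mod_eq (a + b) a n (by omega) (by omega)]
      rw [if_pos h]
      omega
  · rw [RightFirstWins]
    simp only [Finset.mem_singleton]
    constructor
    · rintro ⟨s, hs, hs0, hsn, hL⟩
      rw [hs] at hs0 hsn hL
      rw [(ih _ (by omega)).1, sub_mod_eq (a + b) b n (by omega) hsn] at hL
      split_ifs at hL with h
      · exact h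
      · omega
    · intro h
      refine ⟨b, rfl, by omega, by omega, ?_⟩
      rw [(ih _ (by omega)).1, sub_mod_eq (a + b) b n (by omega) (by omega)]
      rw [if_pos h]
      omega

theorem stmt_1 (a b : ℕ) (ha : 0 < a) (hab : a < b) (n : ℕ) :
    (n % (a + b) < a → outcome {a} {b} n = .P) ∧
    (a ≤ n % (a + b) → n % (a + b) < b → outcome {a} {b} n = .L) ∧
    (b ≤ n % (a + b) → outcome {a} {b} n = .N) := by
  obtain ⟨hL, hR⟩ := main_char a b ha hab n
  refine ⟨fun h => ?_, fun h1 h2 => ?_, fun h => ?_⟩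
  · have h1 : ¬ LeftFirstWins {a} {b} n := by rw [hL]; omega
    have h2 : ¬ RightFirstWins {a} {b} n := by rw [hR]; omega
    simp [outcome, h1, h2]
  · have h1' : LeftFirstWins {a} {b} n := by rw [hL]; omega
    have h2' : ¬ RightFirstWins {a} {b} n := by rw [hR]; omega
    simp [outcome, h1', h2']
  · have h1 : LeftFirstWins {a} {b} n := by rw [hL]; omega
    have h2 : RightFirstWins {a} {b} n := by rw [hR]; omega
    simp [outcome, h1, h2]
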